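/- arXiv:math/9812048 — 2 statements merged into one kernel-verified Lean document; each statement's English description precedes it below -/
import Mathlib

section
/- The map p: ℂ* × ℂ* → ℂ³, p(l,m) = (l + l⁻¹, m + m⁻¹, lm + l⁻¹m⁻¹), satisfies p(l,m) = p(l',m') if and only if (l',m') = (l,m) or (l',m') = (l⁻¹, m⁻¹). In particular p is a two-to-one map away from the four points (l,m) with l, m ∈ {1, −1}. -/
/-! Since `x + x⁻¹ = y + y⁻¹` means `y = x` or `y = x⁻¹`, the first two coordinates force
`l' ∈ {l, l⁻¹}` and `m' ∈ {m, m⁻¹}`. For the mixed choices `(l, m⁻¹)` and `(l⁻¹, m)` the third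
coordinate differs from that of `(l, m)` by `(l⁻¹ - l)(m - m⁻¹)`, so they only occur when
`l = l⁻¹` or `m = m⁻¹`, i.e. when they coincide with `(l, m)` or `(l⁻¹, m⁻¹)`. -/

theorem add_inv_eq_add_inv_iff {K : Type*} [Field K] {x y : K} (hx : x ≠ 0) (hy : y ≠ 0) :
    x + x⁻¹ = y + y⁻¹ ↔ y = x ∨ y = x⁻¹ := by
  have key : x + x⁻¹ - (y + y⁻¹) = (x - y) * (x * y - 1) / (x * y) := by
    field_simp
    ring
  rw [← sub_eq_zero, key, div_eq_zero_iff, mul_eq_zero, sub_eq_zero, sub_eq_zero,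
    or_iff_left (mul_ne_zero hx hy), mul_comm x y, mul_eq_one_iff_eq_inv₀ hx, eq_comm (a := x)]

theorem mul_inv_add_inv_mul_eq_iff {K : Type*} [Field K] (l m : K) :
    l * m⁻¹ + l⁻¹ * m = l * m + l⁻¹ * m⁻¹ ↔ l⁻¹ = l ∨ m⁻¹ = m := by
  rw [← sub_eq_zero, show l * m⁻¹ + l⁻¹ * m - (l * m + l⁻¹ * m⁻¹) = (l⁻¹ - l) * (m - m⁻¹) by ring,
    mul_eq_zero, sub_eq_zero, sub_eq_zero, eq_comm (a := m)]

/-- p(l,m) = (l+l⁻¹, m+m⁻¹, lm+l⁻¹m⁻¹) satisfies p(l,m) = p(l',m') iff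
(l',m') = (l,m) or (l',m') = (l⁻¹,m⁻¹); in particular p is two-to-one away from
the four points with l, m ∈ {1,−1}. -/
theorem p_two_fold_cover (l m l' m' : ℂ) (hl : l ≠ 0) (hm : m ≠ 0)
    (hl' : l' ≠ 0) (hm' : m' ≠ 0) :
    ((l + l⁻¹, m + m⁻¹, l * m + l⁻¹ * m⁻¹)
        = (l' + l'⁻¹, m' + m'⁻¹, l' * m' + l'⁻¹ * m'⁻¹))
      ↔ ((l' = l ∧ m' = m) ∨ (l' = l⁻¹ ∧ m' = m⁻¹)) := by
  simp only [Prod.mk.injEq]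
  constructor
  · rintro ⟨hL, hM, hLM⟩
    obtain hl₁ | hl₁ := (add_inv_eq_add_inv_iff hl hl').1 hL <;>
    obtain hm₁ | hm₁ := (add_inv_eq_add_inv_iff hm hm').1 hM <;>
    subst l' m'
    · exact .inl ⟨rfl, rfl⟩
    · rw [inv_inv] at hLM
      obtain h | h := (mul_inv_add_inv_mul_eq_iff _ _).1 hLM.symm
      · exact .inr ⟨h.symm, rfl⟩
      · exact .inl ⟨rfl, h⟩
    · rw [inv_inv, add_comm (l⁻¹ * m)] at hLM
      obtain h | h := (mul_inv_add_inv_mul_eq_iff _ _).1 hLM.symm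
      · exact .inl ⟨h, rfl⟩
      · exact .inr ⟨rfl, h.symm⟩
    · exact .inr ⟨rfl, rfl⟩
  · rintro (⟨rfl, rfl⟩ | ⟨rfl, rfl⟩)
    · exact ⟨rfl, rfl, rfl⟩
    · simp only [inv_inv]
      exact ⟨add_comm _ _, add_comm _ _, add_comm _ _⟩
end

section
/- In the quantum plane ℂ_t[l,m] (relation lm = t²ml), the left ideal generated by f₁ = m² + (t² + t⁻²)m + 1 and f₂ = t⁻³l²m² + t⁻⁵l²m + t⁻¹m + t equals the left ideal generated by g₁ = m² + (t² + t⁻²)m + 1 and g₂ = l²m + t⁻²l² − m − t², where t is a nonzero complex number with t⁴ ≠ 1. -/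
/-!
The identity `f₂ = t⁻³ l² g₁ - t⁻¹ g₂` holds already in the free algebra on `l, m`.
Since `-t⁻¹` is invertible, each generating pair lies in the left ideal spanned by the other.
-/

theorem Submodule.span_pair_eq_of_eq_add_smul {K R M : Type*} [Field K] [Ring R] [Algebra K R]
    [AddCommGroup M] [Module R M] [Module K M] [IsScalarTower K R M] {a b c : M} (x : R) {u : K}
    (hu : u ≠ 0) (h : b = x • a + u • c) : span R {a, b} = span R {a, c} := by
  have hc : c = u⁻¹ • b - (u⁻¹ • x) • a := by
    rw [h, smul_add, inv_smul_smul₀ hu, smul_assoc]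
    abel
  apply le_antisymm <;> rw [span_le, Set.insert_subset_iff, Set.singleton_subset_iff] <;>
    refine ⟨subset_span (Set.mem_insert a _), ?_⟩
  · rw [h]
    exact add_mem (smul_mem _ x (subset_span (by simp)))
      (smul_of_tower_mem _ u (subset_span (by simp)))
  · rw [hc]
    exact sub_mem (smul_of_tower_mem _ _ (subset_span (by simp)))
      (smul_mem _ _ (subset_span (by simp)))

theorem unknot_f₂_eq_smul_l_sq_mul_g₁_sub_smul_g₂ {K A : Type*} [Field K] [Ring A] [Algebra K A]
    {t : K} (ht : t ≠ 0) (l m : A) :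
    t ^ (-3 : ℤ) • (l ^ 2 * m ^ 2) + t ^ (-5 : ℤ) • (l ^ 2 * m) + t ^ (-1 : ℤ) • m + t • (1 : A) =
      (t ^ (-3 : ℤ) • l ^ 2) • (m ^ 2 + (t ^ (2 : ℤ) + t ^ (-2 : ℤ)) • m + 1) +
        (-t ^ (-1 : ℤ)) • (l ^ 2 * m + t ^ (-2 : ℤ) • l ^ 2 - m - t ^ (2 : ℤ) • (1 : A)) := by
  simp only [smul_eq_mul, mul_add, smul_mul_assoc, mul_smul_comm, mul_one]
  match_scalars <;> field_simp <;> ring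

theorem quantum_plane_unknot_ideal_groebner_general
    (t : ℂ) (ht : t ≠ 0) (A : Type*) [Ring A] [Algebra ℂ A]
    (l m : A) :
    Submodule.span A
        ({m ^ 2 + (t ^ (2 : ℤ) + t ^ (-2 : ℤ)) • m + 1,
          (t ^ (-3 : ℤ)) • (l ^ 2 * m ^ 2) + (t ^ (-5 : ℤ)) • (l ^ 2 * m)
            + (t ^ (-1 : ℤ)) • m + t • (1 : A)} : Set A)
      = Submodule.span A
          ({m ^ 2 + (t ^ (2 : ℤ) + t ^ (-2 : ℤ)) • m + 1,
            l ^ 2 * m + (t ^ (-2 : ℤ)) • l ^ 2 - m - (t ^ (2 : ℤ)) • (1 : A)} : Set A) :=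
  Submodule.span_pair_eq_of_eq_add_smul _ (neg_ne_zero.2 (zpow_ne_zero _ ht))
    (unknot_f₂_eq_smul_l_sq_mul_g₁_sub_smul_g₂ ht l m)

/-- In the quantum plane ℂ_t[l,m] (lm = t²ml, t ≠ 0, t⁴ ≠ 1), the left ideal
generated by f₁ = m² + (t²+t⁻²)m + 1 and f₂ = t⁻³l²m² + t⁻⁵l²m + t⁻¹m + t
equals the left ideal generated by g₁ = m² + (t²+t⁻²)m + 1 and
g₂ = l²m + t⁻²l² − m − t². -/
theorem quantum_plane_unknot_ideal_groebner
    (t : ℂ) (ht : t ≠ 0) (ht4 : t ^ 4 ≠ 1) (A : Type*) [Ring A] [Algebra ℂ A]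
    (l m : A) (rel : l * m = (t ^ 2 : ℂ) • (m * l))
    (B : Module.Basis (ℕ × ℕ) ℂ A) (hB : ∀ p q : ℕ, B (p, q) = l ^ p * m ^ q) :
    Submodule.span A
        ({m ^ 2 + (t ^ (2 : ℤ) + t ^ (-2 : ℤ)) • m + 1,
          (t ^ (-3 : ℤ)) • (l ^ 2 * m ^ 2) + (t ^ (-5 : ℤ)) • (l ^ 2 * m)
            + (t ^ (-1 : ℤ)) • m + t • (1 : A)} : Set A)
      = Submodule.span A
          ({m ^ 2 + (t ^ (2 : ℤ) + t ^ (-2 : ℤ)) • m + 1,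
            l ^ 2 * m + (t ^ (-2 : ℤ)) • l ^ 2 - m - (t ^ (2 : ℤ)) • (1 : A)} : Set A) :=
  quantum_plane_unknot_ideal_groebner_general t ht A l m
end
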